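/- Assume α_i ∈ (0,1], ω_i + δ'_i > 0, and δ_i ≤ δ'_i for every i; let q ∈ (0,1]ⁿ satisfy δ_i ≤ δ'_i + (1 − 1/q_i)·ω_i for every i; fix nonnegative initial vectors x(0), y(0) ∈ ℝⁿ; and let P ⊆ {1,…,n}×{1,…,n} satisfy ρ(M_{−P}(q)) < 1 and ρ(N_{−P}) < 1. Then the lower bound does not exceed the upper bound: σ^L(P) = 1ᵀ·A^{−1}·(D·(I − N_{−P})^{−1} − I)·(x(0) + W·(W + D')^{−1}·y(0)) ≤ 1ᵀ·(A + Q(I − A))^{−1}·(D·(I − M_{−P}(q))^{−1} − I)·(x(0) + Q·y(0)) = σ^U(P). (The chain inequality σ^L(P) ≤ σ(P) ≤ σ^U(P) stated in Section IV, restricted to its two closed-form endpoints.) -/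

import Mathlib

/-!
Since `δ ≤ δ' + (1 − 1/q)ω`, the minimum defining `C(q)` is just `δ`, so `N_{−P}` and `M_{−P}(q)`
are both of the form `I − D + V·S0·B_{−P}`, with `V = A` and `V = A + Q(I − A) ≥ A` respectively.
For such a matrix `D(I − N)⁻¹ − I = V·S0·B_{−P}·(I − N)⁻¹`, so the prefactor `V⁻¹` cancels and both
bounds read `1ᵀ·S0·B_{−P}·(I − N)⁻¹·x`. A spectral radius below `1` makes `(I − N)⁻¹ = ∑ Nᵏ` a
convergent Neumann series (Gelfand's formula), hence entrywise nonnegative and monotone in the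
nonnegative matrix `N ≤ M`. Finally `ω/(ω + δ') ≤ q`, so the initial vector of `σᴸ` is dominated
by that of `σᵁ`.
-/

open Matrix Filter Finset

/-- Spectral radius of a real square matrix: the maximum modulus of its complex
eigenvalues (elements of the spectrum of the matrix viewed over `ℂ`). -/
noncomputable def specRad {n : ℕ} (M : Matrix (Fin n) (Fin n) ℝ) : ℝ :=
  sSup {r : ℝ | ∃ μ : ℂ, μ ∈ spectrum ℂ (M.map (Complex.ofReal)) ∧ r = ‖μ‖}

/-- The matrix `B` with the entries indexed by the edge set `P` deleted (set to `0`). -/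
def Bdel {n : ℕ} (B : Matrix (Fin n) (Fin n) ℝ) (P : Finset (Fin n × Fin n)) :
    Matrix (Fin n) (Fin n) ℝ :=
  Matrix.of fun i j => if (i, j) ∈ P then 0 else B i j

/-- The lower-bound set function
`σᴸ(P) = 1ᵀ·A⁻¹·(D·(I − N₋ₚ)⁻¹ − I)·(x0 + W·(W + D')⁻¹·y0)`. -/
noncomputable def sigmaL {n : ℕ} (α ω δ δ' s x0 y0 : Fin n → ℝ)
    (B : Matrix (Fin n) (Fin n) ℝ) (P : Finset (Fin n × Fin n)) : ℝ :=
  (fun _ => (1 : ℝ)) ⬝ᵥ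
    ((Matrix.diagonal α)⁻¹ *
      (Matrix.diagonal δ *
        (1 - (1 - Matrix.diagonal δ +
          Matrix.diagonal α * Matrix.diagonal s * Bdel B P))⁻¹ - 1)) *ᵥ
      (x0 + (Matrix.diagonal ω * (Matrix.diagonal ω + Matrix.diagonal δ')⁻¹) *ᵥ y0)

/-- The upper-bound set function
`σᵁ(P) = 1ᵀ·(A + Q(I − A))⁻¹·(D·(I − M₋ₚ(q))⁻¹ − I)·(x0 + Q·y0)`. -/
noncomputable def sigmaU {n : ℕ} (α ω δ δ' s q x0 y0 : Fin n → ℝ)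
    (B : Matrix (Fin n) (Fin n) ℝ) (P : Finset (Fin n × Fin n)) : ℝ :=
  (fun _ => (1 : ℝ)) ⬝ᵥ
    ((Matrix.diagonal α + Matrix.diagonal q * (1 - Matrix.diagonal α))⁻¹ *
      (Matrix.diagonal δ *
        (1 - (1 - Matrix.diagonal (fun i => min (δ i) (δ' i + (1 - 1 / q i) * ω i)) +
          (Matrix.diagonal α + Matrix.diagonal q * (1 - Matrix.diagonal α)) *
            Matrix.diagonal s * Bdel B P))⁻¹ - 1)) *ᵥ
      (x0 + Matrix.diagonal q *ᵥ y0)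

theorem summable_pow_of_spectralRadius_lt_one {A : Type*} [NormedRing A] [NormedAlgebra ℂ A]
    [CompleteSpace A] {a : A} (h : spectralRadius ℂ a < 1) : Summable (a ^ ·) := by
  obtain ⟨r, hρr, hr1⟩ := ENNReal.lt_iff_exists_nnreal_btwn.mp h
  have hbound : ∀ᶠ k : ℕ in atTop, ‖a ^ k‖₊ ≤ r ^ k := by
    filter_upwards
      [(spectrum.pow_nnnorm_pow_one_div_tendsto_nhds_spectralRadius a).eventually_lt_const hρr,
        eventually_ge_atTop 1] with k hk hk1
    have hk0 : (0 : ℝ) < k := by exact_mod_cast hk1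
    have := (ENNReal.rpow_lt_rpow hk hk0).le
    rw [← ENNReal.rpow_mul, one_div_mul_cancel hk0.ne', ENNReal.rpow_one,
      ENNReal.rpow_natCast] at this
    exact_mod_cast this
  refine .of_norm_bounded_eventually_nat
    (summable_geometric_of_lt_one r.coe_nonneg (by exact_mod_cast hr1)) ?_
  filter_upwards [hbound] with k hk
  exact_mod_cast hk

theorem spectralRadius_map_ofReal_le_specRad {n : ℕ} (M : Matrix (Fin n) (Fin n) ℝ) :
    spectralRadius ℂ (M.map Complex.ofReal) ≤ ENNReal.ofReal (specRad M) := by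
  have hbdd : BddAbove {r : ℝ | ∃ μ ∈ spectrum ℂ (M.map Complex.ofReal), r = ‖μ‖} := by
    simpa only [eq_comm, Set.image] using
      ((M.map Complex.ofReal).finite_spectrum.image (‖·‖)).bddAbove
  refine iSup₂_le fun μ hμ => ?_
  rw [← ENNReal.ofReal_coe_nnreal, coe_nnnorm]
  exact ENNReal.ofReal_le_ofReal (le_csSup hbdd ⟨μ, hμ, rfl⟩)

theorem summable_pow_of_specRad_lt_one {n : ℕ} {M : Matrix (Fin n) (Fin n) ℝ}
    (h : specRad M < 1) : Summable (M ^ ·) := by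
  have hρ : spectralRadius ℂ (M.map Complex.ofReal) < 1 :=
    (spectralRadius_map_ofReal_le_specRad M).trans_lt (by simpa using h)
  -- The operator norm only serves to run Gelfand's formula; its topology is the entrywise one.
  have hc : Summable ((M.map Complex.ofReal) ^ ·) := by
    let := Matrix.linftyOpNormedRing (n := Fin n) (α := ℂ)
    let := Matrix.linftyOpNormedAlgebra (n := Fin n) (R := ℂ) (α := ℂ)
    exact summable_pow_of_spectralRadius_lt_one hρ
  convert hc.map Complex.reAddGroupHom.mapMatrix
    (continuous_id.matrix_map Complex.continuous_re) using 1
  ext k : 1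
  change M ^ k = ((M.map Complex.ofRealHom) ^ k).map Complex.re
  rw [← Matrix.map_pow, Matrix.map_map]
  ext i j
  simp

namespace Matrix

section Neumann

variable {ι R : Type*} [Fintype ι] [DecidableEq ι] [CommRing R] [TopologicalSpace R]
  [IsTopologicalRing R] [T2Space R] {M : Matrix ι ι R}

theorem isUnit_one_sub_of_summable_pow (h : Summable (M ^ ·)) : IsUnit (1 - M) :=
  (isUnit_iff_isUnit_det _).mpr (isUnit_det_of_right_inverse h.one_sub_mul_tsum_pow)

theorem inv_one_sub_eq_tsum_pow (h : Summable (M ^ ·)) : (1 - M)⁻¹ = ∑' k, M ^ k :=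
  inv_eq_right_inv h.one_sub_mul_tsum_pow

theorem hasSum_pow_apply_inv_one_sub (h : Summable (M ^ ·)) (i j : ι) :
    HasSum (fun k => (M ^ k) i j) ((1 - M)⁻¹ i j) := by
  rw [inv_one_sub_eq_tsum_pow h]
  exact h.hasSum.map (entryAddMonoidHom R i j) (continuous_id.matrix_elem i j)

end Neumann

section EntrywiseOrder

variable {ι R : Type*} [Fintype ι] [Semiring R] [PartialOrder R] [IsOrderedRing R]

theorem mul_apply_nonneg {X Y : Matrix ι ι R} (hX : ∀ i j, 0 ≤ X i j) (hY : ∀ i j, 0 ≤ Y i j)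
    (i j : ι) : 0 ≤ (X * Y) i j :=
  Finset.sum_nonneg fun l _ => mul_nonneg (hX i l) (hY l j)

theorem mul_apply_le_mul_apply {X X' Y Y' : Matrix ι ι R} (hX : ∀ i j, 0 ≤ X i j)
    (hXX' : ∀ i j, X i j ≤ X' i j) (hY : ∀ i j, 0 ≤ Y i j) (hYY' : ∀ i j, Y i j ≤ Y' i j)
    (i j : ι) : (X * Y) i j ≤ (X' * Y') i j :=
  Finset.sum_le_sum fun l _ =>
    mul_le_mul (hXX' i l) (hYY' l j) (hY l j) ((hX i l).trans (hXX' i l))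

theorem mulVec_le_mulVec {X Y : Matrix ι ι R} {u v : ι → R} (hX : ∀ i j, 0 ≤ X i j)
    (hXY : ∀ i j, X i j ≤ Y i j) (hu : 0 ≤ u) (huv : u ≤ v) : X *ᵥ u ≤ Y *ᵥ v := fun i =>
  Finset.sum_le_sum fun j _ =>
    mul_le_mul (hXY i j) (huv j) (hu j) ((hX i j).trans (hXY i j))

variable [DecidableEq ι]

theorem diagonal_mulVec_nonneg {w u : ι → R} (hw : 0 ≤ w) (hu : 0 ≤ u) : 0 ≤ diagonal w *ᵥ u :=
  fun i => by
    rw [mulVec_diagonal]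
    exact mul_nonneg (hw i) (hu i)

theorem diagonal_mulVec_le_diagonal_mulVec {w w' u : ι → R} (hww' : w ≤ w') (hu : 0 ≤ u) :
    diagonal w *ᵥ u ≤ diagonal w' *ᵥ u := fun i => by
  rw [mulVec_diagonal, mulVec_diagonal]
  exact mul_le_mul_of_nonneg_right (hww' i) (hu i)

theorem pow_apply_le_pow_apply {X Y : Matrix ι ι R} (hX : ∀ i j, 0 ≤ X i j)
    (hXY : ∀ i j, X i j ≤ Y i j) (k : ℕ) : ∀ i j, (X ^ k) i j ≤ (Y ^ k) i j := by
  induction k with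
  | zero => intro i j; rfl
  | succ k ih =>
    simp only [pow_succ]
    exact mul_apply_le_mul_apply (pow_apply_nonneg hX k) ih hX hXY

end EntrywiseOrder

section NeumannOrder

variable {ι : Type*} [Fintype ι] [DecidableEq ι]

theorem inv_one_sub_apply_nonneg {M : Matrix ι ι ℝ} (hM : ∀ i j, 0 ≤ M i j)
    (h : Summable (M ^ ·)) (i j : ι) : 0 ≤ (1 - M)⁻¹ i j :=
  (hasSum_pow_apply_inv_one_sub h i j).nonneg fun k => pow_apply_nonneg hM k i j

theorem inv_one_sub_apply_le {N M : Matrix ι ι ℝ} (hN : ∀ i j, 0 ≤ N i j)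
    (hNM : ∀ i j, N i j ≤ M i j) (hsN : Summable (N ^ ·)) (hsM : Summable (M ^ ·)) (i j : ι) :
    (1 - N)⁻¹ i j ≤ (1 - M)⁻¹ i j :=
  hasSum_le (fun k => pow_apply_le_pow_apply hN hNM k i j) (hasSum_pow_apply_inv_one_sub hsN i j)
    (hasSum_pow_apply_inv_one_sub hsM i j)

end NeumannOrder

theorem inv_diagonal_of_ne_zero {ι K : Type*} [Fintype ι] [DecidableEq ι] [Field K]
    {v : ι → K} (hv : ∀ i, v i ≠ 0) : (diagonal v)⁻¹ = diagonal fun i => (v i)⁻¹ :=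
  inv_eq_right_inv (by simp [diagonal_mul_diagonal, hv])

end Matrix

theorem Bdel_apply_nonneg {n : ℕ} {B : Matrix (Fin n) (Fin n) ℝ} (hB : ∀ i j, 0 ≤ B i j)
    (P : Finset (Fin n × Fin n)) (i j : Fin n) : 0 ≤ Bdel B P i j :=
  ite_nonneg le_rfl (hB i j)

/-- `N_{−P} = stepMatrix δ α s B_{−P}`, and `M_{−P}(q) = stepMatrix δ (α + q(1 − α)) s B_{−P}` once
`C(q) = D`. -/
def stepMatrix {n : ℕ} (δ v s : Fin n → ℝ) (B : Matrix (Fin n) (Fin n) ℝ) :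
    Matrix (Fin n) (Fin n) ℝ :=
  1 - diagonal δ + diagonal v * diagonal s * B

section StepMatrix

variable {n : ℕ} {δ v s : Fin n → ℝ} {B : Matrix (Fin n) (Fin n) ℝ}

theorem stepMatrix_apply (i j : Fin n) :
    stepMatrix δ v s B i j = (if i = j then 1 - δ i else 0) + v i * s i * B i j := by
  rw [stepMatrix, Matrix.add_apply, Matrix.sub_apply, diagonal_mul_diagonal, diagonal_mul,
    one_apply, diagonal_apply]
  split <;> ring

theorem stepMatrix_apply_nonneg (hδ : ∀ i, δ i ≤ 1) (hv : ∀ i, 0 ≤ v i) (hs : ∀ i, 0 ≤ s i)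
    (hB : ∀ i j, 0 ≤ B i j) (i j : Fin n) : 0 ≤ stepMatrix δ v s B i j := by
  rw [stepMatrix_apply]
  have := mul_nonneg (mul_nonneg (hv i) (hs i)) (hB i j)
  split <;> linarith [hδ i]

theorem stepMatrix_apply_le_of_le {v' : Fin n → ℝ} (hvv' : ∀ i, v i ≤ v' i) (hs : ∀ i, 0 ≤ s i)
    (hB : ∀ i j, 0 ≤ B i j) (i j : Fin n) : stepMatrix δ v s B i j ≤ stepMatrix δ v' s B i j := by
  rw [stepMatrix_apply, stepMatrix_apply]
  gcongr
  · exact hB i j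
  · exact hs i
  · exact hvv' i

theorem inv_diagonal_mul_diagonal_mul_inv_one_sub_stepMatrix_sub_one (hv : ∀ i, v i ≠ 0)
    (h : IsUnit (1 - stepMatrix δ v s B)) :
    (diagonal v)⁻¹ * (diagonal δ * (1 - stepMatrix δ v s B)⁻¹ - 1) =
      diagonal s * B * (1 - stepMatrix δ v s B)⁻¹ := by
  have hsub : 1 - stepMatrix δ v s B = diagonal δ - diagonal v * (diagonal s * B) := by
    rw [stepMatrix, Matrix.mul_assoc]
    abel
  rw [hsub] at h ⊢
  set K := (diagonal δ - diagonal v * (diagonal s * B))⁻¹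
  have hK : (diagonal δ - diagonal v * (diagonal s * B)) * K = 1 :=
    mul_nonsing_inv _ ((isUnit_iff_isUnit_det _).mp h)
  have hDK : diagonal δ * K - 1 = diagonal v * (diagonal s * B * K) := by
    rw [← hK, ← Matrix.sub_mul, sub_sub_cancel, Matrix.mul_assoc]
  rw [hDK, nonsing_inv_mul_cancel_left]
  exact (isUnit_iff_isUnit_det _).mp
    (isUnit_diagonal.mpr (Pi.isUnit_iff.mpr fun i => (hv i).isUnit))

end StepMatrix

section Bounds

variable {n : ℕ} {α ω δ δ' s q x0 y0 : Fin n → ℝ} {B : Matrix (Fin n) (Fin n) ℝ}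
  {P : Finset (Fin n × Fin n)}

theorem sigmaL_eq (hα : ∀ i, α i ≠ 0) (hωδ' : ∀ i, ω i + δ' i ≠ 0)
    (h : IsUnit (1 - stepMatrix δ α s (Bdel B P))) :
    sigmaL α ω δ δ' s x0 y0 B P = (fun _ => 1) ⬝ᵥ
      (diagonal s * Bdel B P * (1 - stepMatrix δ α s (Bdel B P))⁻¹) *ᵥ
        (x0 + diagonal (fun i => ω i / (ω i + δ' i)) *ᵥ y0) := by
  have hW : diagonal ω * (diagonal ω + diagonal δ')⁻¹ = diagonal fun i => ω i / (ω i + δ' i) := by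
    rw [diagonal_add, inv_diagonal_of_ne_zero hωδ', diagonal_mul_diagonal]
    rfl
  rw [← hW, ← inv_diagonal_mul_diagonal_mul_inv_one_sub_stepMatrix_sub_one hα h]
  rfl

theorem diagonal_add_diagonal_mul_one_sub_diagonal :
    diagonal α + diagonal q * (1 - diagonal α) = diagonal fun i => α i + q i * (1 - α i) := by
  rw [← diagonal_one, diagonal_sub, diagonal_mul_diagonal, diagonal_add]

theorem one_sub_diagonal_min_add_eq_stepMatrix (hqδ : ∀ i, δ i ≤ δ' i + (1 - 1 / q i) * ω i) :
    1 - diagonal (fun i => min (δ i) (δ' i + (1 - 1 / q i) * ω i)) +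
        (diagonal α + diagonal q * (1 - diagonal α)) * diagonal s * B =
      stepMatrix δ (fun i => α i + q i * (1 - α i)) s B := by
  rw [diagonal_add_diagonal_mul_one_sub_diagonal, stepMatrix]
  simp only [min_eq_left (hqδ _)]

theorem sigmaU_eq (hqδ : ∀ i, δ i ≤ δ' i + (1 - 1 / q i) * ω i)
    (hg : ∀ i, α i + q i * (1 - α i) ≠ 0)
    (h : IsUnit (1 - stepMatrix δ (fun i => α i + q i * (1 - α i)) s (Bdel B P))) :
    sigmaU α ω δ δ' s q x0 y0 B P = (fun _ => 1) ⬝ᵥ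
      (diagonal s * Bdel B P * (1 - stepMatrix δ (fun i => α i + q i * (1 - α i)) s (Bdel B P))⁻¹)
        *ᵥ (x0 + diagonal q *ᵥ y0) := by
  rw [← inv_diagonal_mul_diagonal_mul_inv_one_sub_stepMatrix_sub_one hg h, sigmaU,
    one_sub_diagonal_min_add_eq_stepMatrix hqδ, diagonal_add_diagonal_mul_one_sub_diagonal]

end Bounds

theorem div_add_le_of_le_add_one_sub_inv_mul {d ω δ' q : ℝ} (hd : 0 ≤ d) (hq : 0 < q)
    (hωδ' : 0 < ω + δ') (h : d ≤ δ' + (1 - 1 / q) * ω) : ω / (ω + δ') ≤ q := by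
  have hωq : ω / q ≤ ω + δ' := by
    have : (1 - 1 / q) * ω = ω - ω / q := by ring
    linarith
  rw [div_le_iff₀ hq] at hωq
  rw [div_le_iff₀ hωδ']
  linarith

theorem sigmaL_le_sigmaU_general
    (n : ℕ) (α ω δ δ' s : Fin n → ℝ)
    (hα : ∀ i, 0 < α i ∧ α i ≤ 1) (hω : ∀ i, 0 ≤ ω i ∧ ω i ≤ 1)
    (hδ : ∀ i, 0 ≤ δ i ∧ δ i ≤ 1)
    (hs : ∀ i, 0 ≤ s i ∧ s i ≤ 1)
    (hωδ'pos : ∀ i, 0 < ω i + δ' i)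
    (B : Matrix (Fin n) (Fin n) ℝ) (hB : ∀ i j, 0 ≤ B i j)
    (q : Fin n → ℝ) (hq : ∀ i, 0 < q i ∧ q i ≤ 1)
    (hqδ : ∀ i, δ i ≤ δ' i + (1 - 1 / q i) * ω i)
    (x0 y0 : Fin n → ℝ) (hx0 : ∀ i, 0 ≤ x0 i) (hy0 : ∀ i, 0 ≤ y0 i)
    (P : Finset (Fin n × Fin n))
    (hρM : specRad
      (1 - Matrix.diagonal (fun i => min (δ i) (δ' i + (1 - 1 / q i) * ω i)) +
        (Matrix.diagonal α + Matrix.diagonal q * (1 - Matrix.diagonal α)) *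
          Matrix.diagonal s * Bdel B P) < 1)
    (hρN : specRad
      (1 - Matrix.diagonal δ + Matrix.diagonal α * Matrix.diagonal s * Bdel B P) < 1) :
    sigmaL α ω δ δ' s x0 y0 B P ≤ sigmaU α ω δ δ' s q x0 y0 B P := by
  set g : Fin n → ℝ := fun i => α i + q i * (1 - α i)
  have hαg : ∀ i, α i ≤ g i := fun i =>
    le_add_of_nonneg_right (mul_nonneg (hq i).1.le (sub_nonneg.mpr (hα i).2))
  have hB' := Bdel_apply_nonneg hB P
  have hsN : Summable (stepMatrix δ α s (Bdel B P) ^ ·) := summable_pow_of_specRad_lt_one hρN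
  have hsM : Summable (stepMatrix δ g s (Bdel B P) ^ ·) :=
    summable_pow_of_specRad_lt_one (one_sub_diagonal_min_add_eq_stepMatrix hqδ ▸ hρM)
  have hN0 := stepMatrix_apply_nonneg (fun i => (hδ i).2) (fun i => (hα i).1.le)
    (fun i => (hs i).1) hB'
  have hNM := stepMatrix_apply_le_of_le (δ := δ) hαg (fun i => (hs i).1) hB'
  have hK0 := inv_one_sub_apply_nonneg hN0 hsN
  have hSB : ∀ i j, 0 ≤ (diagonal s * Bdel B P) i j := fun i j => by
    rw [diagonal_mul]
    exact mul_nonneg (hs i).1 (hB' i j)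
  have hw : 0 ≤ fun i => ω i / (ω i + δ' i) := fun i => div_nonneg (hω i).1 (hωδ'pos i).le
  have hwq : (fun i => ω i / (ω i + δ' i)) ≤ q := fun i =>
    div_add_le_of_le_add_one_sub_inv_mul (hδ i).1 (hq i).1 (hωδ'pos i) (hqδ i)
  rw [sigmaL_eq (fun i => (hα i).1.ne') (fun i => (hωδ'pos i).ne')
      (isUnit_one_sub_of_summable_pow hsN),
    sigmaU_eq hqδ (fun i => ((hα i).1.trans_le (hαg i)).ne') (isUnit_one_sub_of_summable_pow hsM)]
  refine dotProduct_le_dotProduct_of_nonneg_left ?_ fun _ => zero_le_one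
  exact mulVec_le_mulVec (mul_apply_nonneg hSB hK0)
    (mul_apply_le_mul_apply hSB (fun _ _ => le_rfl) hK0 (inv_one_sub_apply_le hN0 hNM hsN hsM))
    (add_nonneg hx0 (diagonal_mulVec_nonneg hw hy0))
    (add_le_add_right (diagonal_mulVec_le_diagonal_mulVec hwq hy0) x0)

/-- The lower bound does not exceed the upper bound: `σᴸ(P) ≤ σᵁ(P)`
(the two closed-form endpoints of the Sandwich chain `σᴸ ≤ σ ≤ σᵁ`). -/
theorem sigmaL_le_sigmaU
    (n : ℕ) (hn : 1 ≤ n) (α ω δ δ' s : Fin n → ℝ)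
    (hα : ∀ i, 0 < α i ∧ α i ≤ 1) (hω : ∀ i, 0 ≤ ω i ∧ ω i ≤ 1)
    (hδ : ∀ i, 0 ≤ δ i ∧ δ i ≤ 1) (hδ' : ∀ i, 0 ≤ δ' i ∧ δ' i ≤ 1)
    (hs : ∀ i, 0 ≤ s i ∧ s i ≤ 1) (hωδ' : ∀ i, ω i + δ' i ≤ 1)
    (hωδ'pos : ∀ i, 0 < ω i + δ' i) (hass1 : ∀ i, δ i ≤ δ' i)
    (B : Matrix (Fin n) (Fin n) ℝ) (hB : ∀ i j, 0 ≤ B i j)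
    (q : Fin n → ℝ) (hq : ∀ i, 0 < q i ∧ q i ≤ 1)
    (hqδ : ∀ i, δ i ≤ δ' i + (1 - 1 / q i) * ω i)
    (x0 y0 : Fin n → ℝ) (hx0 : ∀ i, 0 ≤ x0 i) (hy0 : ∀ i, 0 ≤ y0 i)
    (P : Finset (Fin n × Fin n))
    (hρM : specRad
      (1 - Matrix.diagonal (fun i => min (δ i) (δ' i + (1 - 1 / q i) * ω i)) +
        (Matrix.diagonal α + Matrix.diagonal q * (1 - Matrix.diagonal α)) *
          Matrix.diagonal s * Bdel B P) < 1)
    (hρN : specRad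
      (1 - Matrix.diagonal δ + Matrix.diagonal α * Matrix.diagonal s * Bdel B P) < 1) :
    sigmaL α ω δ δ' s x0 y0 B P ≤ sigmaU α ω δ δ' s q x0 y0 B P :=
  sigmaL_le_sigmaU_general n α ω δ δ' s hα hω hδ hs hωδ'pos B hB q hq hqδ x0 y0 hx0 hy0 P hρM hρN
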